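/- Let V ⊂ ℝ^n be a compact convex measurable set of positive Lebesgue measure, let σ > 0, let 0 < γ ≤ β, and let φ : ℝ^n → ℝ be continuous with φ(q) ≥ β for all q. For p ∈ ℝ^n define λ_p(q) = exp(−‖p − q‖²/σ²)(φ(q) − γ·exp(−‖p − q‖²/σ²)), the mass M_V(p) = ∫_V λ_p(q) dq, the centroid C_V(p) = (∫_V q λ_p(q) dq)/M_V(p), and F(p) = ∫_V (φ(q) − γ·exp(−‖p − q‖²/σ²))² dq. Then for every p ∈ ℝ^n, ∇F(p) = (4γ/σ²)·M_V(p)·(p − C_V(p)), and ∇F(p) = 0 if and only if p = C_V(p). -/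

import Mathlib

/-!
Differentiating under the integral sign (legitimate since everything is jointly continuous and
`V` is compact), the integrand `(φ q - γ g)²` with `g = exp (-‖p - q‖²/σ²)` has gradient
`(4γ/σ²) g (φ q - γ g) (p - q) = (4γ/σ²) λ_p(q) (p - q)`, which integrates over `V` to
`(4γ/σ²) M_V(p) (p - C_V(p))`. As `φ ≥ β ≥ γ` and `g < 1` away from `p`, the density `λ_p` is
positive off a null set, so `M_V(p) > 0` and the gradient vanishes exactly at the centroid.
-/

open MeasureTheory

variable {n : ℕ}

/-- The modified density
`λ_p q = exp (-‖p - q‖²/σ²) · (φ q - γ · exp (-‖p - q‖²/σ²))`. -/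
noncomputable def modDensity (σ γ : ℝ) (φ : EuclideanSpace ℝ (Fin n) → ℝ)
    (p q : EuclideanSpace ℝ (Fin n)) : ℝ :=
  Real.exp (-‖p - q‖ ^ 2 / σ ^ 2) *
    (φ q - γ * Real.exp (-‖p - q‖ ^ 2 / σ ^ 2))

/-- The generalized mass `M_V p = ∫_V λ_p q dq`. -/
noncomputable def genMass (V : Set (EuclideanSpace ℝ (Fin n))) (σ γ : ℝ)
    (φ : EuclideanSpace ℝ (Fin n) → ℝ) (p : EuclideanSpace ℝ (Fin n)) : ℝ :=
  ∫ q in V, modDensity σ γ φ p q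

/-- The generalized centroid `C_V p = (∫_V q λ_p q dq) / M_V p`. -/
noncomputable def genCentroid (V : Set (EuclideanSpace ℝ (Fin n))) (σ γ : ℝ)
    (φ : EuclideanSpace ℝ (Fin n) → ℝ) (p : EuclideanSpace ℝ (Fin n)) :
    EuclideanSpace ℝ (Fin n) :=
  (genMass V σ γ φ p)⁻¹ • ∫ q in V, modDensity σ γ φ p q • q

open Filter Topology

theorem hasFDerivAt_setIntegral_of_isCompact {α H E : Type*}
    [TopologicalSpace α] [T2Space α] [MeasurableSpace α] [OpensMeasurableSpace α]
    {μ : Measure α} [IsFiniteMeasureOnCompacts μ]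
    [NormedAddCommGroup H] [NormedSpace ℝ H] [NormedAddCommGroup E] [NormedSpace ℝ E]
    {K : Set α} (hK : IsCompact K) {F : H → α → E} {F' : H → α → H →L[ℝ] E} {x₀ : H}
    (hF : ∀ x, Continuous (F x)) (hF' : Continuous (Function.uncurry F'))
    (hF_deriv : ∀ x a, HasFDerivAt (F · a) (F' x a) x) :
    HasFDerivAt (fun x => ∫ a in K, F x a ∂μ) (∫ a in K, F' x₀ a ∂μ) x₀ := by
  have hF'₀ : Continuous (F' x₀) := hF'.comp (Continuous.prodMk_right x₀)
  -- tube lemma, as `K` is compact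
  obtain ⟨s, hs, hs_bound⟩ : ∃ s ∈ 𝓝 x₀, ∀ x ∈ s, ∀ a ∈ K, ‖F' x a‖ < ‖F' x₀ a‖ + 1 :=
    (hK.eventually_forall_of_forall_eventually fun a _ =>
      hF'.norm.continuousAt.eventually_lt (by fun_prop) (lt_add_one _)).exists_mem
  exact hasFDerivAt_integral_of_dominated_of_fderiv_le (bound := fun a => ‖F' x₀ a‖ + 1) hs
    (.of_forall fun x => ((hF x).continuousOn.integrableOn_compact hK).aestronglyMeasurable)
    ((hF x₀).continuousOn.integrableOn_compact hK)
    (hF'₀.continuousOn.integrableOn_compact hK).aestronglyMeasurable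
    ((ae_restrict_iff' hK.measurableSet).2
      (.of_forall fun a ha x hx => (hs_bound x hx a ha).le))
    ((hF'₀.norm.add continuous_const).continuousOn.integrableOn_compact hK)
    (.of_forall fun a x _ => hF_deriv x a)

theorem hasGradientAt_setIntegral_of_isCompact {α H : Type*}
    [TopologicalSpace α] [T2Space α] [MeasurableSpace α] [OpensMeasurableSpace α]
    {μ : Measure α} [IsFiniteMeasureOnCompacts μ]
    [NormedAddCommGroup H] [InnerProductSpace ℝ H] [CompleteSpace H]
    {K : Set α} (hK : IsCompact K) {F : H → α → ℝ} {G : H → α → H} {x₀ : H}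
    (hF : ∀ x, Continuous (F x)) (hG : Continuous (Function.uncurry G))
    (hF_grad : ∀ x a, HasGradientAt (F · a) (G x a) x) :
    HasGradientAt (fun x => ∫ a in K, F x a ∂μ) (∫ a in K, G x₀ a ∂μ) x₀ := by
  have h_comm := (InnerProductSpace.toDual ℝ H).toLinearIsometry.integral_comp_comm (G x₀)
    (μ := μ.restrict K)
  simp only [LinearIsometryEquiv.coe_toLinearIsometry] at h_comm
  rw [hasGradientAt_iff_hasFDerivAt, ← h_comm]
  exact hasFDerivAt_setIntegral_of_isCompact
    (F' := fun x a => InnerProductSpace.toDual ℝ H (G x a))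
    hK hF ((InnerProductSpace.toDual ℝ H).continuous.comp hG) hF_grad

theorem hasGradientAt_sq_sub_mul_exp_neg_norm_sub_sq_div {F : Type*} [NormedAddCommGroup F]
    [InnerProductSpace ℝ F] [CompleteSpace F] (a γ σ : ℝ) (q x : F) :
    HasGradientAt (fun p => (a - γ * Real.exp (-‖p - q‖ ^ 2 / σ ^ 2)) ^ 2)
      ((4 * γ / σ ^ 2 * (Real.exp (-‖x - q‖ ^ 2 / σ ^ 2) *
        (a - γ * Real.exp (-‖x - q‖ ^ 2 / σ ^ 2)))) • (x - q)) x := by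
  have h_arg : HasFDerivAt (fun p => -‖p - q‖ ^ 2 / σ ^ 2)
      ((-(σ ^ 2)⁻¹) • 2 • innerSL ℝ (x - q)) x := by
    have h := ((hasFDerivAt_id x).sub_const q).norm_sq.mul_const (-(σ ^ 2)⁻¹)
    have h_fun : (fun p : F => -‖p - q‖ ^ 2 / σ ^ 2) =
        fun p => ‖id p - q‖ ^ 2 * -(σ ^ 2)⁻¹ := by
      ext p; rw [id]; ring
    rw [h_fun]
    exact h.congr_fderiv (by ext v; simp)
  rw [hasGradientAt_iff_hasFDerivAt]
  refine (((h_arg.exp.const_mul γ).const_sub a).pow 2).congr_fderiv ?_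
  ext v
  simp only [InnerProductSpace.toDual_apply_apply, Nat.add_one_sub_one, pow_one, nsmul_eq_mul,
    Nat.cast_ofNat, map_sub, neg_smul, smul_neg, neg_neg, smul_apply,
    sub_apply, coe_innerSL_apply, smul_eq_mul, map_smul]
  ring

theorem exp_neg_norm_sub_sq_div_le_one {F : Type*} [SeminormedAddCommGroup F] (σ : ℝ) (x q : F) :
    Real.exp (-‖x - q‖ ^ 2 / σ ^ 2) ≤ 1 :=
  Real.exp_le_one_iff.2 (div_nonpos_of_nonpos_of_nonneg (by simp) (by positivity))

theorem exp_neg_norm_sub_sq_div_lt_one {F : Type*} [NormedAddCommGroup F] {σ : ℝ} (hσ : σ ≠ 0)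
    {x q : F} (hxq : x ≠ q) : Real.exp (-‖x - q‖ ^ 2 / σ ^ 2) < 1 := by
  have : 0 < ‖x - q‖ := norm_pos_iff.2 (sub_ne_zero.2 hxq)
  exact Real.exp_lt_one_iff.2 (div_neg_of_neg_of_pos (by simp; positivity) (by positivity))

section

variable {σ γ : ℝ} {φ : EuclideanSpace ℝ (Fin n) → ℝ}

theorem continuous_modDensity (hφ : Continuous φ) (p : EuclideanSpace ℝ (Fin n)) :
    Continuous (modDensity σ γ φ p) := by
  unfold modDensity
  fun_prop

theorem modDensity_nonneg (hγ : 0 ≤ γ) {p q : EuclideanSpace ℝ (Fin n)} (hφq : γ ≤ φ q) :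
    0 ≤ modDensity σ γ φ p q := by
  have h_le := exp_neg_norm_sub_sq_div_le_one σ p q
  exact mul_nonneg (Real.exp_pos _).le (by nlinarith)

theorem modDensity_pos (hσ : σ ≠ 0) (hγ : 0 < γ) {p q : EuclideanSpace ℝ (Fin n)}
    (hφq : γ ≤ φ q) (hqp : q ≠ p) :
    0 < modDensity σ γ φ p q := by
  have h_lt := exp_neg_norm_sub_sq_div_lt_one hσ hqp.symm
  exact mul_pos (Real.exp_pos _) (by nlinarith)

variable {V : Set (EuclideanSpace ℝ (Fin n))}

theorem genMass_pos [Nontrivial (EuclideanSpace ℝ (Fin n))] (hV : IsCompact V)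
    (hVpos : 0 < volume V) (hσ : σ ≠ 0) (hγ : 0 < γ) (hφ : Continuous φ)
    (hφγ : ∀ q, γ ≤ φ q) (p : EuclideanSpace ℝ (Fin n)) :
    0 < genMass V σ γ φ p := by
  have h_int : IntegrableOn (modDensity σ γ φ p) V :=
    (continuous_modDensity hφ p).continuousOn.integrableOn_compact hV
  rw [genMass, setIntegral_pos_iff_support_of_nonneg_ae
    (.of_forall fun q => modDensity_nonneg hγ.le (hφγ q)) h_int]
  have h_sub : V \ {p} ⊆ Function.support (modDensity σ γ φ p) ∩ V :=
    fun q hq => ⟨(modDensity_pos hσ hγ (hφγ q) hq.2).ne', hq.1⟩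
  calc (0 : ENNReal) < volume V := hVpos
    _ = volume (V \ {p}) := (measure_sdiff_null (measure_singleton p)).symm
    _ ≤ _ := measure_mono h_sub

theorem setIntegral_modDensity_smul_sub (hV : IsCompact V) (hφ : Continuous φ)
    {p : EuclideanSpace ℝ (Fin n)} (hM : genMass V σ γ φ p ≠ 0) :
    ∫ q in V, modDensity σ γ φ p q • (p - q) =
      genMass V σ γ φ p • (p - genCentroid V σ γ φ p) := by
  have h_int : IntegrableOn (modDensity σ γ φ p) V :=
    (continuous_modDensity hφ p).continuousOn.integrableOn_compact hV
  have h_int' : IntegrableOn (fun q => modDensity σ γ φ p q • q) V :=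
    ((continuous_modDensity hφ p).smul continuous_id).continuousOn.integrableOn_compact hV
  simp only [smul_sub]
  rw [integral_sub (h_int.smul_const p) h_int', integral_smul_const, genCentroid, smul_smul,
    mul_inv_cancel₀ hM, one_smul]
  rfl

theorem hasGradientAt_setIntegral_sq_sub_gaussian (hV : IsCompact V) (hφ : Continuous φ)
    {p : EuclideanSpace ℝ (Fin n)} (hM : genMass V σ γ φ p ≠ 0) :
    HasGradientAt (fun p' => ∫ q in V, (φ q - γ * Real.exp (-‖p' - q‖ ^ 2 / σ ^ 2)) ^ 2)
      ((4 * γ / σ ^ 2 * genMass V σ γ φ p) • (p - genCentroid V σ γ φ p)) p := by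
  have h := hasGradientAt_setIntegral_of_isCompact (μ := volume) (x₀ := p) hV
    (G := fun x q => (4 * γ / σ ^ 2 * modDensity σ γ φ x q) • (x - q))
    (by fun_prop) (by unfold modDensity; fun_prop)
    (fun x q => hasGradientAt_sq_sub_mul_exp_neg_norm_sub_sq_div (φ q) γ σ q x)
  simpa only [mul_smul, integral_smul, setIntegral_modDensity_smul_sub hV hφ hM] using h

end

theorem gradient_eq_mass_smul_sub_centroid_general
    (V : Set (EuclideanSpace ℝ (Fin n)))
    (hVcompact : IsCompact V)
    (hVpos : 0 < volume V)
    (σ β γ : ℝ) (hσ : 0 < σ) (hγ : 0 < γ) (hγβ : γ ≤ β)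
    (φ : EuclideanSpace ℝ (Fin n) → ℝ) (hφcont : Continuous φ)
    (hφβ : ∀ q : EuclideanSpace ℝ (Fin n), β ≤ φ q) :
    ∀ p : EuclideanSpace ℝ (Fin n),
      gradient
        (fun p' : EuclideanSpace ℝ (Fin n) =>
          ∫ q in V, (φ q - γ * Real.exp (-‖p' - q‖ ^ 2 / σ ^ 2)) ^ 2) p =
        ((4 * γ / σ ^ 2) * genMass V σ γ φ p) • (p - genCentroid V σ γ φ p) ∧
      (gradient
        (fun p' : EuclideanSpace ℝ (Fin n) =>
          ∫ q in V, (φ q - γ * Real.exp (-‖p' - q‖ ^ 2 / σ ^ 2)) ^ 2) p = 0 ↔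
        p = genCentroid V σ γ φ p) := by
  intro p
  rcases subsingleton_or_nontrivial (EuclideanSpace ℝ (Fin n)) with _ | _
  · exact ⟨Subsingleton.elim _ _, iff_of_true (Subsingleton.elim _ _) (Subsingleton.elim _ _)⟩
  have hM := genMass_pos hVcompact hVpos hσ.ne' hγ hφcont (fun q => hγβ.trans (hφβ q)) p
  have hgrad := (hasGradientAt_setIntegral_sq_sub_gaussian hVcompact hφcont hM.ne').gradient
  refine ⟨hgrad, ?_⟩
  rw [hgrad, smul_eq_zero, sub_eq_zero, or_iff_right (by positivity)]

/-- For a compact convex measurable set `V` of positive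
measure, a continuous density `φ ≥ β` and `0 < γ ≤ β`, the gradient of the
cell cost `F p = ∫_V (φ q - γ exp (-‖p - q‖²/σ²))² dq` is
`∇F p = (4γ/σ²) · M_V p · (p - C_V p)`, and it vanishes iff `p` is the
generalized centroid of `V`. -/
theorem gradient_eq_mass_smul_sub_centroid
    (V : Set (EuclideanSpace ℝ (Fin n)))
    (hVcompact : IsCompact V) (hVconv : Convex ℝ V)
    (hVmeas : MeasurableSet V) (hVpos : 0 < volume V)
    (σ β γ : ℝ) (hσ : 0 < σ) (hγ : 0 < γ) (hγβ : γ ≤ β)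
    (φ : EuclideanSpace ℝ (Fin n) → ℝ) (hφcont : Continuous φ)
    (hφβ : ∀ q : EuclideanSpace ℝ (Fin n), β ≤ φ q) :
    ∀ p : EuclideanSpace ℝ (Fin n),
      gradient
        (fun p' : EuclideanSpace ℝ (Fin n) =>
          ∫ q in V, (φ q - γ * Real.exp (-‖p' - q‖ ^ 2 / σ ^ 2)) ^ 2) p =
        ((4 * γ / σ ^ 2) * genMass V σ γ φ p) • (p - genCentroid V σ γ φ p) ∧
      (gradient
        (fun p' : EuclideanSpace ℝ (Fin n) =>
          ∫ q in V, (φ q - γ * Real.exp (-‖p' - q‖ ^ 2 / σ ^ 2)) ^ 2) p = 0 ↔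
        p = genCentroid V σ γ φ p) :=
  gradient_eq_mass_smul_sub_centroid_general V hVcompact hVpos σ β γ hσ hγ hγβ φ hφcont hφβ
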